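/- arXiv:1701.01131 — 5 statements merged into one kernel-verified Lean document; each statement's English description precedes it below -/
import Mathlib

section
/- If Ω is a compact Hausdorff topological space and every bounded sequence in C(Ω) (the Banach space of continuous real-valued functions with sup norm) has a subsequence converging weakly to some element of C(Ω), then Ω is finite. -/
/-!
An infinite compact Hausdorff space contains a sequence of pairwise disjoint nonempty open sets
`U n`. Pick `ω n ∈ U n` and Urysohn functions `f n` with values in `[0, 1]`, supported in `U n`,
with `f n (ω n) = 1`. The partial sums `g n = ∑ k < n, f k` have norm at most `1`, and since point
evaluations are continuous functionals, a weak limit `x₀` of a subsequence is their pointwise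
limit: `x₀ (ω k) = 1` for every `k`, while `x₀ = 0` off `⋃ n, U n`. A cluster point `p` of `ω`
lies off every `U n`, so `x₀ p = 0`, contradicting the continuity of `x₀` at `p`.
-/

open Filter Function Topology Set

section DisjointSupports

variable {X : Type*} {U : ℕ → Set X} {f : ℕ → X → ℝ}

lemma sum_apply_of_mem (hU : Pairwise (Disjoint on U)) (hf : ∀ k, ∀ x ∉ U k, f k x = 0)
    {j : ℕ} {x : X} (hx : x ∈ U j) (s : Finset ℕ) :
    ∑ k ∈ s, f k x = if j ∈ s then f j x else 0 := by
  rw [← Finset.sum_ite_eq' s j (fun k => f k x)]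
  refine Finset.sum_congr rfl fun k _ => ?_
  split_ifs with hkj
  · rfl
  · exact hf k x fun hk => (hU hkj).ne_of_mem hk hx rfl

lemma sum_apply_of_notMem_iUnion (hf : ∀ k, ∀ x ∉ U k, f k x = 0) {x : X}
    (hx : x ∉ ⋃ k, U k) (s : Finset ℕ) : ∑ k ∈ s, f k x = 0 :=
  Finset.sum_eq_zero fun k _ => hf k x fun hk => hx (mem_iUnion_of_mem k hk)

lemma sum_apply_mem_Icc (hU : Pairwise (Disjoint on U)) (hf : ∀ k, ∀ x ∉ U k, f k x = 0)
    (hf01 : ∀ k x, f k x ∈ Icc (0 : ℝ) 1) (s : Finset ℕ) (x : X) :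
    ∑ k ∈ s, f k x ∈ Icc (0 : ℝ) 1 := by
  by_cases hx : x ∈ ⋃ k, U k
  · obtain ⟨j, hj⟩ := mem_iUnion.1 hx
    rw [sum_apply_of_mem hU hf hj]
    split_ifs
    exacts [hf01 j x, left_mem_Icc.2 zero_le_one]
  · rw [sum_apply_of_notMem_iUnion hf hx]
    exact left_mem_Icc.2 zero_le_one

end DisjointSupports

lemma ContinuousMap.norm_sum_le_one {X : Type*} [TopologicalSpace X] [CompactSpace X]
    {U : ℕ → Set X} {f : ℕ → C(X, ℝ)} (hU : Pairwise (Disjoint on U))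
    (hf : ∀ k, ∀ x ∉ U k, f k x = 0) (hf01 : ∀ k x, f k x ∈ Icc (0 : ℝ) 1) (s : Finset ℕ) :
    ‖∑ k ∈ s, f k‖ ≤ 1 := by
  refine (ContinuousMap.norm_le _ zero_le_one).2 fun x => ?_
  have hx := sum_apply_mem_Icc (f := fun k => f k) hU hf hf01 s x
  rw [ContinuousMap.sum_apply, Real.norm_of_nonneg hx.1]
  exact hx.2

lemma MapClusterPt.notMem_iUnion {X : Type*} [TopologicalSpace X] {U : ℕ → Set X} {ω : ℕ → X}
    {p : X} (hp : MapClusterPt p atTop ω) (hUo : ∀ n, IsOpen (U n))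
    (hU : Pairwise (Disjoint on U)) (hω : ∀ n, ω n ∈ U n) : p ∉ ⋃ n, U n := by
  rintro ⟨_, ⟨m, rfl⟩, hpm⟩
  have hfreq : ∃ᶠ k in atTop, ω k ∈ U m :=
    mapClusterPt_iff_frequently.1 hp _ ((hUo m).mem_nhds hpm)
  refine Nat.frequently_atTop_iff_infinite.1 hfreq ((finite_singleton m).subset fun k hk => ?_)
  exact hU.eq (not_disjoint_iff.2 ⟨ω k, hω k, hk⟩)

lemma MapClusterPt.apply_eq_of_forall_apply_eq {X Y : Type*} [TopologicalSpace X]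
    [TopologicalSpace Y] [T2Space Y] {ω : ℕ → X} {p : X} (hp : MapClusterPt p atTop ω)
    {g : X → Y} (hg : Continuous g) {y : Y} (hgω : ∀ k, g (ω k) = y) : g p = y := by
  have hcomp : MapClusterPt (g p) atTop (g ∘ ω) := hp.continuousAt_comp hg.continuousAt
  have hconst : Tendsto (g ∘ ω) atTop (𝓝 y) := by
    simp only [Function.comp_def, hgω]
    exact tendsto_const_nhds
  exact eq_of_nhds_neBot (ClusterPt.mono hcomp hconst)

lemma exists_seq_bump_pairwise_disjoint (X : Type*) [TopologicalSpace X] [NormalSpace X]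
    [T2Space X] [Infinite X] :
    ∃ (U : ℕ → Set X) (ω : ℕ → X) (f : ℕ → C(X, ℝ)), (∀ n, IsOpen (U n)) ∧
      Pairwise (Disjoint on U) ∧ (∀ n, ω n ∈ U n) ∧ (∀ n, ∀ x ∉ U n, f n x = 0) ∧
      (∀ n, f n (ω n) = 1) ∧ ∀ n x, f n x ∈ Icc (0 : ℝ) 1 := by
  obtain ⟨U, hUinf, hUo, hU⟩ := exists_seq_infinite_isOpen_pairwise_disjoint X
  choose ω hω using fun n => (hUinf n).nonempty
  choose f hf0 hf1 hf01 using fun n =>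
    exists_continuous_zero_one_of_isClosed (hUo n).isClosed_compl isClosed_singleton
      (disjoint_singleton_right.2 fun h => h (hω n))
  exact ⟨U, ω, f, hUo, hU, hω, fun n x hx => hf0 n hx, fun n => hf1 n rfl, hf01⟩

theorem stmt_0 (Ω : Type*) [TopologicalSpace Ω] [CompactSpace Ω] [T2Space Ω]
    (h : ∀ x : ℕ → C(Ω, ℝ), (∃ M : ℝ, ∀ n, ‖x n‖ ≤ M) →
      ∃ φ : ℕ → ℕ, StrictMono φ ∧ ∃ x₀ : C(Ω, ℝ),
        ∀ ξ : C(Ω, ℝ) →L[ℝ] ℝ, Tendsto (fun k => ξ (x (φ k))) atTop (𝓝 (ξ x₀))) :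
    Finite Ω := by
  by_contra hfin
  have : Infinite Ω := not_finite_iff_infinite.1 hfin
  obtain ⟨U, ω, f, hUo, hU, hω, hfU, hfω, hf01⟩ := exists_seq_bump_pairwise_disjoint Ω
  let g : ℕ → C(Ω, ℝ) := fun n => ∑ k ∈ Finset.range n, f k
  have hg : ∀ n x, g n x = ∑ k ∈ Finset.range n, f k x := fun n x =>
    ContinuousMap.sum_apply _ _ x
  obtain ⟨φ, hφ, x₀, hx₀⟩ := h g ⟨1, fun n => ContinuousMap.norm_sum_le_one hU hfU hf01 _⟩
  have hlim : ∀ x, Tendsto (fun j => g (φ j) x) atTop (𝓝 (x₀ x)) := fun x =>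
    hx₀ (ContinuousMap.evalCLM ℝ x)
  have hx₀ω : ∀ k, x₀ (ω k) = 1 := by
    intro k
    refine tendsto_nhds_unique (hlim (ω k)) (tendsto_atTop_of_eventually_const (i₀ := k + 1) ?_)
    intro j hj
    have hk : k ∈ Finset.range (φ j) := Finset.mem_range.2 (hj.trans (hφ.id_le j))
    rw [hg, sum_apply_of_mem hU hfU (hω k), if_pos hk, hfω]
  obtain ⟨p, -, hp⟩ := isCompact_univ.exists_mapClusterPt (f := atTop) (u := ω)
    (le_principal_iff.2 univ_mem)
  have hpU : p ∉ ⋃ m, U m := hp.notMem_iUnion hUo hU hω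
  have hx₀p : x₀ p = 0 := tendsto_nhds_unique (hlim p) <| by
    simp only [hg, sum_apply_of_notMem_iUnion hfU hpU]
    exact tendsto_const_nhds
  exact zero_ne_one (hx₀p.symm.trans (hp.apply_eq_of_forall_apply_eq x₀.continuous hx₀ω))
end

section
/- In an infinite-dimensional normed real vector space, the closure of the unit sphere in the weak topology equals the closed unit ball. -/
/-!
Every weak neighbourhood of a point `x` contains `x + ker φ₁ ∩ ⋯ ∩ ker φₙ` for finitely many
continuous functionals, and in infinite dimension this intersection contains a line `x + ℝ v`.
Moving along that line, the intermediate value theorem reaches the sphere from any point of the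
ball, so the ball lies in the weak closure of the sphere. Conversely the ball is convex and
norm-closed, hence weakly closed by Mazur's theorem.
-/

open Filter Set Topology

theorem exists_ne_zero_forall_eq_zero {K V ι : Type*} [Field K] [AddCommGroup V] [Module K V]
    [Finite ι] (hV : ¬ FiniteDimensional K V) (φ : ι → V →ₗ[K] K) :
    ∃ v ≠ 0, ∀ i, φ i v = 0 := by
  have hker : LinearMap.ker (LinearMap.pi φ) ≠ ⊥ := fun hbot ↦
    hV (Module.Finite.of_injective _ (LinearMap.ker_eq_bot.mp hbot))
  obtain ⟨v, hv, hv0⟩ := Submodule.exists_mem_ne_zero_of_ne_bot hker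
  exact ⟨v, hv0, fun i ↦ congrFun (LinearMap.mem_ker.mp hv) i⟩

theorem WeakBilin.exists_finite_forall_mem_of_mem_nhds {𝕜 E F : Type*} [CommSemiring 𝕜]
    [TopologicalSpace 𝕜] [AddCommMonoid E] [Module 𝕜 E] [AddCommMonoid F] [Module 𝕜 F]
    {B : E →ₗ[𝕜] F →ₗ[𝕜] 𝕜} {x : WeakBilin B} {s : Set (WeakBilin B)} (hs : s ∈ 𝓝 x) :
    ∃ I : Set F, I.Finite ∧ ∀ y : WeakBilin B, (∀ f ∈ I, B y f = B x f) → y ∈ s := by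
  rw [nhds_induced, mem_comap] at hs
  obtain ⟨t, ht, hts⟩ := hs
  rw [nhds_pi, Filter.mem_pi] at ht
  obtain ⟨I, hI, u, hu, hut⟩ := ht
  refine ⟨I, hI, fun y hy ↦ hts (hut fun f hf ↦ ?_)⟩
  simpa [hy f hf] using mem_of_mem_nhds (hu f)

theorem exists_ne_zero_forall_add_smul_mem_of_mem_nhds {𝕜 E : Type*} [Field 𝕜]
    [TopologicalSpace 𝕜] [ContinuousAdd 𝕜] [ContinuousConstSMul 𝕜 𝕜]
    [AddCommGroup E] [Module 𝕜 E] [TopologicalSpace E]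
    (hE : ¬ FiniteDimensional 𝕜 E) {x : E} {s : Set (WeakSpace 𝕜 E)}
    (hs : s ∈ 𝓝 (toWeakSpace 𝕜 E x)) :
    ∃ v ≠ 0, ∀ c : 𝕜, toWeakSpace 𝕜 E (x + c • v) ∈ s := by
  obtain ⟨I, hI, hIs⟩ := WeakBilin.exists_finite_forall_mem_of_mem_nhds hs
  have : Finite I := hI
  obtain ⟨v, hv0, hv⟩ := exists_ne_zero_forall_eq_zero hE fun f : I ↦ (f : E →L[𝕜] 𝕜).toLinearMap
  refine ⟨v, hv0, fun c ↦ hIs _ fun f hf ↦ ?_⟩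
  show f (x + c • v) = f x
  simp [show f v = 0 from hv ⟨f, hf⟩]

theorem exists_norm_add_smul_eq {E : Type*} [SeminormedAddCommGroup E] [NormedSpace ℝ E]
    {x v : E} {r : ℝ} (hv : 0 < ‖v‖) (hx : ‖x‖ ≤ r) : ∃ c : ℝ, ‖x + c • v‖ = r := by
  set b := (r + ‖x‖) / ‖v‖
  have hb : 0 ≤ b := div_nonneg (by linarith [norm_nonneg x]) hv.le
  have hrb : r ≤ ‖x + b • v‖ := calc
    r = ‖b • v‖ - ‖x‖ := by
      rw [norm_smul, Real.norm_of_nonneg hb, div_mul_cancel₀ _ hv.ne']; ring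
    _ ≤ ‖x + b • v‖ := by
      simpa [add_comm] using norm_sub_norm_le (b • v) (-x)
  have hcont : Continuous fun c : ℝ ↦ ‖x + c • v‖ := by fun_prop
  obtain ⟨c, -, hc⟩ := intermediate_value_Icc hb hcont.continuousOn ⟨by simpa using hx, hrb⟩
  exact ⟨c, hc⟩

theorem closure_toWeakSpace_sphere {E : Type*} [NormedAddCommGroup E] [NormedSpace ℝ E]
    (hE : ¬ FiniteDimensional ℝ E) (z : E) (r : ℝ) :
    closure (toWeakSpace ℝ E '' Metric.sphere z r) = toWeakSpace ℝ E '' Metric.closedBall z r := by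
  refine subset_antisymm ?_ ?_
  · calc closure (toWeakSpace ℝ E '' Metric.sphere z r)
        ⊆ closure (toWeakSpace ℝ E '' Metric.closedBall z r) :=
          closure_mono (image_mono Metric.sphere_subset_closedBall)
      _ = toWeakSpace ℝ E '' Metric.closedBall z r := by
          rw [← (convex_closedBall z r).toWeakSpace_closure ℝ, Metric.isClosed_closedBall.closure_eq]
  · rintro _ ⟨x, hx, rfl⟩
    refine mem_closure_iff_nhds.mpr fun s hs ↦ ?_
    obtain ⟨v, hv, hvs⟩ := exists_ne_zero_forall_add_smul_mem_of_mem_nhds hE hs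
    obtain ⟨c, hc⟩ := exists_norm_add_smul_eq (norm_pos_iff.mpr hv) (mem_closedBall_iff_norm.mp hx)
    refine ⟨_, hvs c, x + c • v, ?_, rfl⟩
    rw [mem_sphere_iff_norm, ← hc, sub_add_eq_add_sub]

theorem stmt_1 (X : Type*) [NormedAddCommGroup X] [NormedSpace ℝ X]
    (h : ¬ FiniteDimensional ℝ X) :
    closure (toWeakSpace ℝ X '' Metric.sphere (0 : X) 1)
      = toWeakSpace ℝ X '' Metric.closedBall (0 : X) 1 :=
  closure_toWeakSpace_sphere h 0 1
end

section
/- If Ω is a compact Hausdorff space such that the Banach space C(Ω) of continuous real-valued functions on Ω is reflexive, then Ω is finite. -/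
/-!
Every point `x₀` of `Ω` is isolated. Take the bump functions of norm at most `1`, equal to `1` at
`x₀` and supported in ever smaller neighbourhoods of `x₀`. By Banach–Alaoglu their images in the
bidual have a weak-* cluster point, which by reflexivity comes from some `g ∈ C(Ω)`. Testing
against point evaluations shows that `g` is the indicator function of `{x₀}`, so `{x₀}` is open.
A compact discrete space is finite.
-/

open Filter Topology Set Metric NormedSpace

theorem exists_forall_clusterPt_of_surjective_inclusionInDoubleDual
    {𝕜 E : Type*} [NontriviallyNormedField 𝕜] [ProperSpace 𝕜]
    [SeminormedAddCommGroup E] [NormedSpace 𝕜 E]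
    (hE : Function.Surjective (inclusionInDoubleDual 𝕜 E))
    {F : Filter E} [F.NeBot] {r : ℝ} (hF : closedBall 0 r ∈ F) :
    ∃ x : E, ∀ φ : StrongDual 𝕜 E, ClusterPt (φ x) (map φ F) := by
  let Φ : E → WeakDual 𝕜 (StrongDual 𝕜 E) :=
    fun x => StrongDual.toWeakDual (inclusionInDoubleDual 𝕜 E x)
  have hΦ : map Φ F ≤ 𝓟 (WeakDual.toStrongDual ⁻¹' closedBall 0 r) := by
    refine le_principal_iff.2 (mem_map.2 (mem_of_superset hF fun x hx => ?_))
    exact (mem_closedBall_zero_iff (a := inclusionInDoubleDual 𝕜 E x)).2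
      ((double_dual_bound 𝕜 E x).trans (mem_closedBall_zero_iff.1 hx))
  obtain ⟨G, -, hG⟩ := (WeakDual.isCompact_closedBall 0 r).exists_clusterPt hΦ
  obtain ⟨x, hx⟩ := hE (WeakDual.toStrongDual G)
  refine ⟨x, fun φ => ?_⟩
  have := hG.map (WeakDual.eval_continuous φ).continuousAt tendsto_map
  rw [map_map] at this
  convert this using 1
  · exact congrArg (· φ) hx
  · rfl

namespace ContinuousMap

variable {Ω : Type*} [TopologicalSpace Ω] [CompactSpace Ω]

theorem exists_norm_le_one_apply_eq_one_eqOn_zero [T2Space Ω] {x₀ : Ω} {U : Set Ω}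
    (hU : U ∈ 𝓝 x₀) :
    ∃ f : C(Ω, ℝ), ‖f‖ ≤ 1 ∧ f x₀ = 1 ∧ EqOn f 0 Uᶜ := by
  have hdisj : Disjoint (interior U)ᶜ {x₀} :=
    disjoint_singleton_right.2 (not_not.2 (mem_interior_iff_mem_nhds.2 hU))
  obtain ⟨f, hf0, hf1, hf01⟩ := exists_continuous_zero_one_of_isClosed
    isOpen_interior.isClosed_compl isClosed_singleton hdisj
  refine ⟨f, (norm_le _ zero_le_one).2 fun x => ?_, hf1 rfl,
    fun x hx => hf0 fun hx' => hx (interior_subset hx')⟩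
  rw [Real.norm_eq_abs, abs_le]
  exact ⟨by linarith [(hf01 x).1], (hf01 x).2⟩

def bumpFilter (x₀ : Ω) : Filter C(Ω, ℝ) :=
  (𝓝 x₀).lift' fun U => {f | ‖f‖ ≤ 1 ∧ f x₀ = 1 ∧ EqOn f 0 Uᶜ}

theorem mem_bumpFilter {x₀ : Ω} {U : Set Ω} (hU : U ∈ 𝓝 x₀) :
    {f : C(Ω, ℝ) | ‖f‖ ≤ 1 ∧ f x₀ = 1 ∧ EqOn f 0 Uᶜ} ∈ bumpFilter x₀ :=
  mem_lift' hU

theorem bumpFilter_neBot [T2Space Ω] (x₀ : Ω) : (bumpFilter x₀).NeBot := by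
  refine (lift'_neBot_iff fun U V hUV => ?_).2 fun _ => exists_norm_le_one_apply_eq_one_eqOn_zero
  exact fun f ⟨hf, hf₀, hfU⟩ => ⟨hf, hf₀, hfU.mono (compl_subset_compl.2 hUV)⟩

theorem isOpen_singleton_of_surjective_inclusionInDoubleDual [T2Space Ω]
    (h : Function.Surjective (inclusionInDoubleDual ℝ C(Ω, ℝ))) (x₀ : Ω) :
    IsOpen {x₀} := by
  have := bumpFilter_neBot x₀
  have hbump : ∀ᶠ f in bumpFilter x₀, ‖f‖ ≤ 1 ∧ f x₀ = 1 :=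
    mem_of_superset (mem_bumpFilter univ_mem) fun _ hf => ⟨hf.1, hf.2.1⟩
  obtain ⟨g, hg⟩ := exists_forall_clusterPt_of_surjective_inclusionInDoubleDual h (r := 1)
    (hbump.mono fun _ hf => mem_closedBall_zero_iff.2 hf.1)
  have hg_eval : ∀ x (c : ℝ), (∀ᶠ f in bumpFilter x₀, f x = c) → g x = c := fun x c hc =>
    (specializes_iff_clusterPt.2 ((hg (evalCLM ℝ x)).mono (tendsto_pure.2 hc))).eq.symm
  have hg₀ : g x₀ = 1 := hg_eval x₀ 1 (hbump.mono fun _ hf => hf.2)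
  have hg_ne : ∀ x ≠ x₀, g x = 0 := fun x hx => hg_eval x 0 <|
    mem_of_superset (mem_bumpFilter (isOpen_compl_singleton.mem_nhds hx.symm)) fun _ hf =>
      hf.2.2 (not_not.2 rfl)
  convert (isOpen_Ioi (a := (1 / 2 : ℝ))).preimage g.continuous
  ext x
  by_cases hx : x = x₀ <;> norm_num [hx, hg₀, hg_ne]

end ContinuousMap

theorem stmt_2 (Ω : Type*) [TopologicalSpace Ω] [CompactSpace Ω] [T2Space Ω]
    (h : Function.Surjective (NormedSpace.inclusionInDoubleDual ℝ C(Ω, ℝ))) :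
    Finite Ω := by
  have : DiscreteTopology Ω := discreteTopology_iff_isOpen_singleton.2
    (ContinuousMap.isOpen_singleton_of_surjective_inclusionInDoubleDual h)
  exact finite_of_compact_of_discrete
end

section
/- If the closed unit ball of a Banach space X is compact in the weak topology, then X is reflexive. -/
/-!
The canonical embedding `J : X → X**` is continuous from the weak topology to the weak-*
topology, so `J` maps the weakly compact unit ball of `X` onto a weak-* compact, hence
weak-* closed, convex set `K`. If some `z` in the unit ball of `X**` were outside `K`, Hahn–Banach
would separate it from `K` by a weak-* continuous functional, i.e. by evaluation at some
`f ∈ X*`; then `f < u` on the unit ball of `X` gives `‖f‖ ≤ u`, while `u < z f ≤ ‖f‖`.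
So `K` is the whole unit ball of `X**`, and `J` is surjective by scaling.
-/

open NormedSpace Metric

section WeakDual

variable {E : Type*} [AddCommGroup E] [TopologicalSpace E] [Module ℝ E]

instance WeakDual.instLocallyConvexSpace : LocallyConvexSpace ℝ (WeakDual ℝ E) :=
  WeakBilin.locallyConvexSpace

lemma WeakDual.exists_eq_eval (φ : StrongDual ℝ (WeakDual ℝ E)) :
    ∃ f : E, ∀ Φ : WeakDual ℝ E, φ Φ = Φ f := by
  obtain ⟨f, hf⟩ := LinearMap.dualEmbedding_surjective (topDualPairing ℝ E) φ
  exact ⟨f, fun Φ => by rw [← hf]; rfl⟩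

end WeakDual

section DoubleDual

variable {X : Type*} [NormedAddCommGroup X] [NormedSpace ℝ X]

lemma ContinuousLinearMap.norm_le_of_forall_closedBall_le {f : StrongDual ℝ X} {u : ℝ}
    (hf : ∀ x ∈ closedBall (0 : X) 1, f x ≤ u) : ‖f‖ ≤ u := by
  have hu : 0 ≤ u := by simpa using hf 0 (mem_closedBall_self zero_le_one)
  refine opNorm_le_of_unit_norm hu fun x hx => abs_le.mpr ⟨?_, hf x (by simp [hx])⟩
  simpa [neg_le] using hf (-x) (by simp [hx])

lemma continuous_toWeakDual_inclusionInDoubleDual :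
    Continuous fun w : WeakSpace ℝ X =>
      StrongDual.toWeakDual (inclusionInDoubleDual ℝ X ((toWeakSpace ℝ X).symm w)) :=
  WeakBilin.continuous_of_continuous_eval _ fun f =>
    WeakBilin.eval_continuous (topDualPairing ℝ X).flip f

lemma exists_inclusionInDoubleDual_eq_of_isClosed
    (hK : IsClosed (StrongDual.toWeakDual ∘ inclusionInDoubleDual ℝ X '' closedBall 0 1))
    {z : StrongDual ℝ (StrongDual ℝ X)} (hz : ‖z‖ ≤ 1) :
    ∃ x, inclusionInDoubleDual ℝ X x = z := by
  by_contra hzK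
  replace hzK : StrongDual.toWeakDual z ∉
      StrongDual.toWeakDual ∘ inclusionInDoubleDual ℝ X '' closedBall 0 1 :=
    fun ⟨x, _, hx⟩ => hzK ⟨x, hx⟩
  obtain ⟨φ, u, hK_lt, hz_gt⟩ := geometric_hahn_banach_closed_point
    ((convex_closedBall (0 : X) 1).linear_image
      (StrongDual.toWeakDual.toLinearMap ∘ₗ (inclusionInDoubleDual ℝ X).toLinearMap)) hK hzK
  obtain ⟨f, hφ⟩ := WeakDual.exists_eq_eval φ
  have hf : ‖f‖ ≤ u := ContinuousLinearMap.norm_le_of_forall_closedBall_le fun x hx =>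
    (hφ _).symm.trans_le (hK_lt _ ⟨x, hx, rfl⟩).le
  have hzf : z f ≤ u := calc
    z f ≤ ‖z‖ * ‖f‖ := (le_abs_self _).trans (z.le_opNorm f)
    _ ≤ ‖f‖ := mul_le_of_le_one_left (norm_nonneg f) hz
    _ ≤ u := hf
  exact (hφ _ ▸ hz_gt).not_ge hzf

lemma surjective_inclusionInDoubleDual_of_isClosed
    (hK : IsClosed (StrongDual.toWeakDual ∘ inclusionInDoubleDual ℝ X '' closedBall 0 1)) :
    Function.Surjective (inclusionInDoubleDual ℝ X) := by
  intro y
  rcases eq_or_ne y 0 with rfl | hy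
  · exact ⟨0, map_zero _⟩
  have hy : ‖y‖ ≠ 0 := fun h => hy (y.opNorm_zero_iff.mp h)
  obtain ⟨x, hx⟩ := exists_inclusionInDoubleDual_eq_of_isClosed hK (z := ‖y‖⁻¹ • y) <|
    (y.opNorm_smul_le _).trans_eq <| by
      rw [norm_inv, Real.norm_of_nonneg (norm_nonneg y), inv_mul_cancel₀ hy]
  exact ⟨‖y‖ • x, by rw [map_smul, hx, smul_inv_smul₀ hy]⟩

end DoubleDual

theorem stmt_13_general (X : Type*) [NormedAddCommGroup X] [NormedSpace ℝ X]
    (h : IsCompact (toWeakSpace ℝ X '' Metric.closedBall (0 : X) 1)) :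
    Function.Surjective (NormedSpace.inclusionInDoubleDual ℝ X) := by
  refine surjective_inclusionInDoubleDual_of_isClosed ?_
  have hK := (h.image continuous_toWeakDual_inclusionInDoubleDual).isClosed
  rwa [Set.image_image] at hK

theorem stmt_13 (X : Type*) [NormedAddCommGroup X] [NormedSpace ℝ X] [CompleteSpace X]
    (h : IsCompact (toWeakSpace ℝ X '' Metric.closedBall (0 : X) 1)) :
    Function.Surjective (NormedSpace.inclusionInDoubleDual ℝ X) :=
  stmt_13_general X h
end

section
/- If every sequence in the closed unit ball of a Banach space X has a weakly convergent subsequence (with limit in X), then the closed unit ball of X is weakly compact. -/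
/-!
Whitley's proof. Embed `X` into its bidual with the weak-star topology, which induces the weak
topology of `X`; by Banach–Alaoglu it suffices to show that the image `J(B)` of the unit ball is
weak-star closed. Let `G` be in its weak-star closure. Alternately choose a finite set of
functionals of norm `≤ 1` that half-norms the span of `G, J x₀, …, J xₙ₋₁` and a point `xₙ ∈ B`
at which all functionals chosen so far are within `1/(n+1)` of their value at `G`. A weak limit
`x` of a subsequence lies in the norm-closed span of the `xₙ` (Mazur), so `G - J x` lies in the
norm closure of the union of these spans. It vanishes on every chosen functional, and a vector
in the closure of a half-normed set that vanishes on the half-norming functionals is `0`.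
Hence `G = J x`.
-/

open Filter Topology Metric Set NormedSpace

section Dual

variable {Y : Type*} [NormedAddCommGroup Y] [NormedSpace ℝ Y]

def IsHalfNorming (D : Set Y) (A : Set (StrongDual ℝ Y)) : Prop :=
  ∀ z ∈ A, ∃ f ∈ D, ‖f‖ ≤ 1 ∧ ‖z‖ ≤ 2 * |z f|

theorem exists_finset_isHalfNorming (E : Submodule ℝ (StrongDual ℝ Y)) [FiniteDimensional ℝ E] :
    ∃ T : Finset Y, IsHalfNorming (T : Set Y) E := by
  classical
  let U : closedBall (0 : Y) 1 → Set (StrongDual ℝ Y) := fun f => {z | ‖z‖ < 2 * |z f|}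
  have hU : ∀ f, IsOpen (U f) := fun f => isOpen_lt continuous_norm (by fun_prop)
  have hsphere : ((↑) : E → StrongDual ℝ Y) '' sphere 0 1 ⊆ ⋃ f, U f := by
    rintro _ ⟨u, hu, rfl⟩
    replace hu : ‖(u : StrongDual ℝ Y)‖ = 1 := by
      simpa [Subtype.dist_eq] using hu
    obtain ⟨f, hf, hfu⟩ := (u : StrongDual ℝ Y).exists_lt_apply_of_lt_opNorm (r := 1 / 2)
      (by rw [hu]; norm_num)
    refine mem_iUnion.2 ⟨⟨f, mem_closedBall_zero_iff.2 hf.le⟩, ?_⟩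
    change ‖(u : StrongDual ℝ Y)‖ < 2 * |(u : StrongDual ℝ Y) f|
    rw [hu, ← Real.norm_eq_abs]
    linarith
  obtain ⟨t, ht⟩ :=
    ((isCompact_sphere (0 : E) 1).image continuous_subtype_val).elim_finite_subcover U hU hsphere
  -- Each `U f` is a cone, so a cover of the unit sphere of `E` serves all of `E`.
  refine ⟨insert 0 (t.map (Function.Embedding.subtype _)), fun z hz => ?_⟩
  rcases eq_or_ne z 0 with rfl | hz0
  · exact ⟨0, by simp, by simp, by simp⟩
  have hnz : 0 < ‖z‖ := norm_pos_iff.2 hz0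
  obtain ⟨f, hft, hf⟩ := mem_iUnion₂.1 <| ht ⟨⟨‖z‖⁻¹ • z, E.smul_mem _ hz⟩,
    by simp [Subtype.dist_eq, norm_smul, hnz.ne'], rfl⟩
  refine ⟨f, Finset.mem_insert_of_mem (Finset.mem_map_of_mem _ hft),
    mem_closedBall_zero_iff.1 f.2, ?_⟩
  replace hf : ‖z‖⁻¹ * ‖z‖ < ‖z‖⁻¹ * (2 * |z f|) := by
    simpa [U, norm_smul, abs_mul, mul_left_comm] using hf
  exact (lt_of_mul_lt_mul_left hf (inv_nonneg.2 hnz.le)).le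

theorem IsHalfNorming.eq_zero_of_mem_closure {D : Set Y} {A : Set (StrongDual ℝ Y)}
    (hDA : IsHalfNorming D A) {y : StrongDual ℝ Y} (hy : y ∈ closure A)
    (hyD : ∀ f ∈ D, y f = 0) : y = 0 := by
  have hle : ∀ z ∈ A, ‖y‖ ≤ 3 * ‖y - z‖ := by
    intro z hz
    obtain ⟨f, hfD, hf, hzf⟩ := hDA z hz
    have hzf' : |z f| ≤ ‖y - z‖ := calc
      |z f| = ‖(y - z) f‖ := by simp [hyD f hfD, Real.norm_eq_abs]
      _ ≤ ‖y - z‖ * ‖f‖ := (y - z).le_opNorm f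
      _ ≤ ‖y - z‖ := mul_le_of_le_one_right (norm_nonneg _) hf
    linarith [norm_le_norm_add_norm_sub' y z]
  refine norm_le_zero_iff.1 (le_of_forall_pos_le_add fun ε hε => ?_)
  obtain ⟨z, hz, hyz⟩ := Metric.mem_closure_iff.1 hy (ε / 3) (by positivity)
  rw [dist_eq_norm] at hyz
  linarith [hle z hz]

theorem WeakDual.exists_forall_abs_sub_lt_of_mem_closure {S : Set (WeakDual ℝ Y)}
    {G : WeakDual ℝ Y} (hG : G ∈ closure S) (T : Finset Y) {ε : ℝ} (hε : 0 < ε) :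
    ∃ s ∈ S, ∀ f ∈ T, |G f - s f| < ε := by
  have hU : (⋂ f ∈ T, {s : WeakDual ℝ Y | |G f - s f| < ε}) ∈ 𝓝 G :=
    (biInter_finset_mem T).2 fun f _ => (isOpen_lt
      (continuous_const.sub (WeakDual.eval_continuous f)).abs continuous_const).mem_nhds
        (by simpa using hε)
  obtain ⟨s, hsU, hsS⟩ := mem_closure_iff_nhds.1 hG _ hU
  exact ⟨s, hsS, by simpa using hsU⟩

end Dual

section Bidual

variable {X : Type*} [NormedAddCommGroup X] [NormedSpace ℝ X]

theorem Convex.mem_of_tendsto_weak {s : Set X} (hconv : Convex ℝ s) (hs : IsClosed s)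
    {ι : Type*} {l : Filter ι} [l.NeBot] {u : ι → X} {x₀ : X} (hu : ∀ᶠ k in l, u k ∈ s)
    (h : ∀ ξ : StrongDual ℝ X, Tendsto (fun k => ξ (u k)) l (𝓝 (ξ x₀))) : x₀ ∈ s := by
  by_contra hx₀
  obtain ⟨ξ, c, hξs, hcx₀⟩ := geometric_hahn_banach_closed_point hconv hs hx₀
  exact (le_of_tendsto (h ξ) (hu.mono fun k hk => (hξs _ hk).le)).not_gt hcx₀

theorem exists_seq_tendsto_and_isHalfNorming {S : Set X} (G : StrongDual ℝ (StrongDual ℝ X))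
    (hG : ∀ (T : Finset (StrongDual ℝ X)) (ε : ℝ), 0 < ε → ∃ x ∈ S, ∀ f ∈ T, |G f - f x| < ε) :
    ∃ (x : ℕ → X) (D : Set (StrongDual ℝ X)), (∀ n, x n ∈ S) ∧
      (∀ f ∈ D, Tendsto (fun n => f (x n)) atTop (𝓝 (G f))) ∧
      IsHalfNorming D
        (⋃ n, (Submodule.span ℝ (insert G (inclusionInDoubleDual ℝ X '' (x '' Iio n))) :
          Set (StrongDual ℝ (StrongDual ℝ X)))) := by
  classical
  set J := inclusionInDoubleDual ℝ X
  choose N hN using fun s : Finset X =>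
    haveI := FiniteDimensional.span_of_finite ℝ ((s.finite_toSet.image J).insert G)
    exists_finset_isHalfNorming (Submodule.span ℝ (insert G (J '' s)))
  choose a haS ha using fun (n : ℕ) (T : Finset (StrongDual ℝ X)) =>
    hG T (1 / (n + 1)) Nat.one_div_pos_of_nat
  -- `stage n` holds the points chosen before step `n` and the functionals chosen up to step `n`.
  let stage : ℕ → Finset X × Finset (StrongDual ℝ X) := fun n => Nat.rec (∅, N ∅)
    (fun n p => (insert (a n p.2) p.1, p.2 ∪ N (insert (a n p.2) p.1))) n
  let x n := a n (stage n).2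
  have hmono : Monotone fun n => (stage n).2 :=
    monotone_nat_of_le_succ fun n => Finset.subset_union_left
  have hprev : ∀ n, x '' Iio n ⊆ (stage n).1 := by
    intro n
    induction n with
    | zero => simp
    | succ n ih =>
      rintro _ ⟨i, hi, rfl⟩
      rcases Nat.lt_succ_iff_lt_or_eq.1 hi with hi | rfl
      · exact Finset.mem_insert_of_mem (ih ⟨i, hi, rfl⟩)
      · exact Finset.mem_insert_self _ _
  have hNstage : ∀ n, N (stage n).1 ⊆ (stage n).2 := by
    rintro (_ | n)
    exacts [subset_rfl, Finset.subset_union_right]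
  refine ⟨x, ⋃ n, ((stage n).2 : Set _), fun n => haS _ _, ?_, ?_⟩
  · intro f hf
    obtain ⟨m, hfm⟩ := mem_iUnion.1 hf
    rw [tendsto_iff_dist_tendsto_zero]
    refine squeeze_zero' (Eventually.of_forall fun n => dist_nonneg) ?_
      tendsto_one_div_add_atTop_nhds_zero_nat
    filter_upwards [eventually_ge_atTop m] with n hn
    rw [Real.dist_eq, abs_sub_comm]
    exact (ha n _ f (hmono hn hfm)).le
  · intro z hz
    obtain ⟨n, hzn⟩ := mem_iUnion.1 hz
    obtain ⟨f, hf, hfz⟩ := hN (stage n).1 z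
      (Submodule.span_mono (insert_subset_insert (image_mono (hprev n))) hzn)
    exact ⟨f, mem_iUnion.2 ⟨n, hNstage n hf⟩, hfz⟩

theorem closure_image_inclusionInDoubleDualWeak_subset_range
    (h : ∀ x : ℕ → X, (∀ n, x n ∈ closedBall (0 : X) 1) →
      ∃ φ : ℕ → ℕ, StrictMono φ ∧ ∃ x₀ : X,
        ∀ ξ : X →L[ℝ] ℝ, Tendsto (fun k => ξ (x (φ k))) atTop (𝓝 (ξ x₀))) :
    closure (inclusionInDoubleDualWeak ℝ X '' (toWeakSpace ℝ X '' closedBall 0 1)) ⊆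
      range (inclusionInDoubleDualWeak ℝ X) := by
  intro G hG
  set J := inclusionInDoubleDual ℝ X
  set G' := WeakDual.toStrongDual G
  obtain ⟨x, D, hxB, hxD, hD⟩ :=
    exists_seq_tendsto_and_isHalfNorming (S := closedBall (0 : X) 1) G' fun T ε hε => by
      obtain ⟨_, ⟨_, ⟨x, hx, rfl⟩, rfl⟩, hs⟩ :=
        WeakDual.exists_forall_abs_sub_lt_of_mem_closure hG T hε
      exact ⟨x, hx, hs⟩
  obtain ⟨φ, hφ, x₀, hx₀⟩ := h x hxB
  have hGD : ∀ f ∈ D, G' f = f x₀ := fun f hf =>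
    tendsto_nhds_unique ((hxD f hf).comp hφ.tendsto_atTop) (hx₀ f)
  let M : ℕ → Submodule ℝ (StrongDual ℝ (StrongDual ℝ X)) :=
    fun n => Submodule.span ℝ (insert G' (J '' (x '' Iio n)))
  have hMmono : Monotone M := fun m n hmn =>
    Submodule.span_mono (insert_subset_insert (image_mono (image_mono (Iio_subset_Iio hmn))))
  have hM := Submodule.coe_iSup_of_directed M hMmono.directed_le
  have hx₀ : x₀ ∈ closure (Submodule.span ℝ (range x) : Set X) :=
    (Submodule.convex _).closure.mem_of_tendsto_weak isClosed_closure
      (Eventually.of_forall fun k => subset_closure (Submodule.subset_span ⟨φ k, rfl⟩)) hx₀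
  have hspan : Submodule.span ℝ (range x) ≤ (⨆ n, M n).comap J.toLinearMap :=
    Submodule.span_le.2 <| range_subset_iff.2 fun k => Submodule.mem_iSup_of_mem (k + 1) <|
      Submodule.subset_span <| mem_insert_of_mem _ ⟨x k, ⟨k, Nat.lt_succ_self k, rfl⟩, rfl⟩
  have hmem : G' - J x₀ ∈ closure (⋃ n, (M n : Set _)) := by
    rw [← hM]
    refine map_mem_closure (f := fun z => G' - J z) (continuous_const.sub J.continuous) hx₀
      fun z hz => Submodule.sub_mem _ ?_ (hspan hz)
    exact Submodule.mem_iSup_of_mem 0 (Submodule.subset_span (mem_insert _ _))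
  have hG'x₀ := sub_eq_zero.1 <|
    hD.eq_zero_of_mem_closure hmem fun f hf => by simp [J, hGD f hf]
  exact ⟨toWeakSpace ℝ X x₀, WeakDual.toStrongDual.injective hG'x₀.symm⟩

end Bidual

theorem stmt_16_general (X : Type*) [NormedAddCommGroup X] [NormedSpace ℝ X]
    (h : ∀ x : ℕ → X, (∀ n, x n ∈ Metric.closedBall (0 : X) 1) →
      ∃ φ : ℕ → ℕ, StrictMono φ ∧ ∃ x₀ : X,
        ∀ ξ : X →L[ℝ] ℝ, Tendsto (fun k => ξ (x (φ k))) atTop (𝓝 (ξ x₀))) :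
    IsCompact (toWeakSpace ℝ X '' Metric.closedBall (0 : X) 1) := by
  have hclosed : IsClosed (toWeakSpace ℝ X '' closedBall (0 : X) 1) := by
    rw [← isClosed_closedBall.closure_eq, (convex_closedBall (0 : X) 1).toWeakSpace_closure ℝ]
    exact isClosed_closure
  rw [← hclosed.closure_eq]
  exact isCompact_closure_of_isBounded ℝ X _
    (by rw [(toWeakSpace ℝ X).injective.preimage_image]; exact isBounded_closedBall)
    (closure_image_inclusionInDoubleDualWeak_subset_range h)

theorem stmt_16 (X : Type*) [NormedAddCommGroup X] [NormedSpace ℝ X] [CompleteSpace X]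
    (h : ∀ x : ℕ → X, (∀ n, x n ∈ Metric.closedBall (0 : X) 1) →
      ∃ φ : ℕ → ℕ, StrictMono φ ∧ ∃ x₀ : X,
        ∀ ξ : X →L[ℝ] ℝ, Tendsto (fun k => ξ (x (φ k))) atTop (𝓝 (ξ x₀))) :
    IsCompact (toWeakSpace ℝ X '' Metric.closedBall (0 : X) 1) :=
  stmt_16_general X h
end
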